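/- arXiv:math/0604060 — 2 statements merged into one kernel-verified Lean document; each statement's English description precedes it below -/
import Mathlib

section
/- Conversely to the above: if (fₙ) and f are continuous maps from a compact metric space K to a compact metric space Y and the graphs of fₙ converge to the graph of f in the Hausdorff metric on K × Y, then fₙ → f uniformly on K. -/
open Filter

/-!
A point `(x, fₙ x)` of the graph of `fₙ` lies within `r` of some point `(y, g y)` of the graph
of `g`; then `d(x, y) < r` and `d(fₙ x, g y) < r`, and uniform continuity of `g` (automatic on
the compact space `K`) makes `d(g x, g y)` small as well.
-/

theorem exists_dist_lt_of_hausdorffEDist_graph_lt {X Y : Type*} [PseudoMetricSpace X]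
    [PseudoMetricSpace Y] {f g : X → Y} {r : ℝ}
    (h : Metric.hausdorffEDist {p : X × Y | p.2 = f p.1} {p : X × Y | p.2 = g p.1}
      < ENNReal.ofReal r) (x : X) :
    ∃ y, dist x y < r ∧ dist (f x) (g y) < r := by
  obtain ⟨⟨y, _⟩, hy, hxy⟩ := Metric.exists_edist_lt_of_hausdorffEDist_lt
    (show (x, f x) ∈ {p : X × Y | p.2 = f p.1} from rfl) h
  rw [Prod.edist_eq, max_lt_iff, edist_lt_ofReal, edist_lt_ofReal, hy] at hxy
  exact ⟨y, hxy⟩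

theorem UniformContinuous.tendstoUniformly_of_tendsto_hausdorffEDist_graph {ι X Y : Type*}
    [PseudoMetricSpace X] [PseudoMetricSpace Y] {l : Filter ι} {f : ι → X → Y} {g : X → Y}
    (hg : UniformContinuous g)
    (h : Tendsto (fun n =>
        Metric.hausdorffEDist {p : X × Y | p.2 = f n p.1} {p : X × Y | p.2 = g p.1})
      l (nhds 0)) :
    TendstoUniformly f g l := by
  rw [Metric.tendstoUniformly_iff]
  intro ε hε
  obtain ⟨δ, hδ, hδg⟩ := Metric.uniformContinuous_iff.1 hg (ε / 2) (half_pos hε)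
  have hr : 0 < min δ (ε / 2) := lt_min hδ (half_pos hε)
  filter_upwards [h.eventually_lt_const (ENNReal.ofReal_pos.2 hr)] with n hn x
  obtain ⟨y, hxy, hfg⟩ := exists_dist_lt_of_hausdorffEDist_graph_lt hn x
  rw [lt_min_iff] at hxy hfg
  calc dist (g x) (f n x) ≤ dist (g x) (g y) + dist (f n x) (g y) := dist_triangle_right _ _ _
    _ < ε / 2 + ε / 2 := add_lt_add (hδg hxy.1) hfg.2
    _ = ε := add_halves ε

theorem uniform_convergence_of_graphs_hausdorff_general
    {K Y : Type*} [MetricSpace K] [CompactSpace K] [MetricSpace Y]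
    (f : ℕ → K → Y) (g : K → Y)
    (hg : Continuous g)
    (hgraphs : Tendsto (fun n =>
        EMetric.hausdorffEdist {p : K × Y | p.2 = f n p.1} {p : K × Y | p.2 = g p.1})
      atTop (nhds 0)) :
    TendstoUniformly f g atTop :=
  (CompactSpace.uniformContinuous_of_continuous hg).tendstoUniformly_of_tendsto_hausdorffEDist_graph
    hgraphs

/-- Conversely: if `fₙ` and `f` are continuous maps from a compact metric space `K` to a
compact metric space `Y` and the graphs of the `fₙ` converge to the graph of `f` in the
Hausdorff metric on `K × Y`, then `fₙ → f` uniformly on `K`. -/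
theorem uniform_convergence_of_graphs_hausdorff
    {K Y : Type*} [MetricSpace K] [CompactSpace K] [MetricSpace Y] [CompactSpace Y]
    (f : ℕ → K → Y) (g : K → Y)
    (hf : ∀ n, Continuous (f n)) (hg : Continuous g)
    (hgraphs : Tendsto (fun n =>
        EMetric.hausdorffEdist {p : K × Y | p.2 = f n p.1} {p : K × Y | p.2 = g p.1})
      atTop (nhds 0)) :
    TendstoUniformly f g atTop :=
  uniform_convergence_of_graphs_hausdorff_general f g hg hgraphs
end

section
/- Let X, Y be metric spaces with Y compact, and suppose a sequence of continuous maps fₙ : X → Y converges to a continuous map f : X → Y in the sense that graphs converge in the Hausdorff metric over each compact set. If D is a relatively compact open subset of X, then (fₙ) converges to f uniformly on compact subsets of D. -/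
open Filter

/-- Continuous-map version of Ivashkovich's Rouché principle, part (a): if continuous
maps `fₙ : X → Y` (with `Y` compact) converge to a continuous map `f` in the sense of
Hausdorff convergence of graphs over every compact set, then on any relatively compact
open subset `D ⊆ X` the convergence is uniform on compact subsets. -/
theorem uniform_on_compacts_of_graph_convergence
    {X Y : Type*} [MetricSpace X] [MetricSpace Y] [CompactSpace Y]
    (f : ℕ → X → Y) (g : X → Y)
    (hf : ∀ n, Continuous (f n)) (hg : Continuous g)
    (hgraphs : ∀ K : Set X, IsCompact K →
      Tendsto (fun n =>
          EMetric.hausdorffEdist ((fun x => (x, f n x)) '' K) ((fun x => (x, g x)) '' K))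
        atTop (nhds 0))
    (D : Set X) (hDopen : IsOpen D) (hDrc : IsCompact (closure D)) :
    ∀ K : Set X, K ⊆ D → IsCompact K → TendstoUniformlyOn f g atTop K := by
  intro K hKD hK
  rw [Metric.tendstoUniformlyOn_iff]
  intro ε hε
  -- uniform continuity of g on K
  have hgu : UniformContinuousOn g K := hK.uniformContinuousOn_of_continuous hg.continuousOn
  rw [Metric.uniformContinuousOn_iff] at hgu
  obtain ⟨δ, hδ, hδg⟩ := hgu (ε / 2) (by linarith)
  set c : ℝ := min δ (ε / 2) with hc
  have hcpos : 0 < c := lt_min hδ (by linarith)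
  have hcE : (0 : ENNReal) < ENNReal.ofReal c := by
    simpa using ENNReal.ofReal_pos.2 hcpos
  have hev := (hgraphs K hK).eventually (gt_mem_nhds hcE)
  filter_upwards [hev] with n hn x hx
  -- the graph point (x, f n x) is close to some graph point of g
  have hp : ((x, f n x) : X × Y) ∈ (fun x => (x, f n x)) '' K := ⟨x, hx, rfl⟩
  have h1 : EMetric.infEdist (x, f n x) ((fun x => (x, g x)) '' K) < ENNReal.ofReal c :=
    lt_of_le_of_lt (EMetric.infEdist_le_hausdorffEdist_of_mem hp) hn
  replace h1 := EMetric.infEdist_lt_iff.1 h1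
  obtain ⟨q, hq, hqd⟩ := h1
  obtain ⟨x', hx', rfl⟩ := hq
  rw [Prod.edist_eq, max_lt_iff] at hqd
  have hd1 : dist x x' < c := by
    rw [← edist_lt_ofReal]; exact hqd.1
  have hd2 : dist (f n x) (g x') < c := by
    rw [← edist_lt_ofReal]; exact hqd.2
  have hgg : dist (g x) (g x') < ε / 2 :=
    hδg x hx x' hx' (lt_of_lt_of_le hd1 (min_le_left _ _))
  calc dist (g x) (f n x) ≤ dist (g x) (g x') + dist (g x') (f n x) := dist_triangle _ _ _
    _ < ε / 2 + ε / 2 := by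
        have := lt_of_lt_of_le hd2 (min_le_right _ _)
        rw [dist_comm] at this
        exact add_lt_add hgg this
    _ = ε := by ring
end
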